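/- arXiv:1812.08902 — 5 statements merged into one kernel-verified Lean document; each statement's English description precedes it below -/
import Mathlib

section
/- Let $c_1, c_2 > 0$ and $0 < \delta_1 < \delta_2 < 1$. Consider the scalar sequence defined by $w_{t+1} = (1 - c_1/(t+1)^{\delta_1}) w_t + c_2/(t+1)^{\delta_2}$ for $t \geq 0$ with arbitrary initial condition $w_0 \in \mathbb{R}$. Then for every $\delta_0$ with $0 \leq \delta_0 < \delta_2 - \delta_1$, we have $\lim_{t \to \infty} (t+1)^{\delta_0} w_t = 0$. -/
/-!
For large `t` the weighted sequence `a t = (t + 1) ^ δ0 * |w t|` satisfies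
`a (t + 1) ≤ (1 - α t) * a t + β t` with `α t = c1 / (2 (t + 1) ^ δ1)` and
`β t = 2 c2 (t + 1) ^ (δ0 - δ2)`: the weight grows by a factor at most `1 + 1 / (t + 1)`, which
uses up only half of the contraction because `δ1 < 1`. Since `∑ α = ∞` and `β = o(α)`
(this is where `δ0 < δ2 - δ1` enters), the excess of `a` over any `ε > 0` is eventually
dominated by `exp (-∑ α)`, so `a → 0`.
-/

open Filter Finset Real

theorem tendsto_zero_of_le_exp_neg_mul {b α : ℕ → ℝ} (hb : ∀ t, 0 ≤ b t)
    (hα : Tendsto (fun n => ∑ i ∈ range n, α i) atTop atTop)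
    (hrec : ∀ᶠ t in atTop, b (t + 1) ≤ exp (-α t) * b t) :
    Tendsto b atTop (nhds 0) := by
  obtain ⟨T, hT⟩ := eventually_atTop.1 hrec
  have hbound : ∀ n ≥ T, b n ≤ exp (-∑ i ∈ Ico T n, α i) * b T := by
    intro n hn
    induction n, hn using Nat.le_induction with
    | base => simp
    | succ n hn ih =>
      calc b (n + 1) ≤ exp (-α n) * b n := hT n hn
        _ ≤ exp (-α n) * (exp (-∑ i ∈ Ico T n, α i) * b T) := by gcongr
        _ = exp (-∑ i ∈ Ico T (n + 1), α i) * b T := by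
          rw [sum_Ico_succ_top hn, ← mul_assoc, ← exp_add, neg_add, add_comm]
  have htail : Tendsto (fun n => ∑ i ∈ Ico T n, α i) atTop atTop :=
    (tendsto_atTop_add_const_right _ _ hα).congr'
      (eventually_atTop.2 ⟨T, fun n hn => (sum_Ico_eq_sub α hn).symm⟩)
  have hlim : Tendsto (fun n => exp (-∑ i ∈ Ico T n, α i) * b T) atTop (nhds 0) := by
    simpa using (tendsto_exp_atBot.comp (tendsto_neg_atTop_atBot.comp htail)).mul_const (b T)
  exact tendsto_of_tendsto_of_tendsto_of_le_of_le' tendsto_const_nhds hlim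
    (Eventually.of_forall hb) (eventually_atTop.2 ⟨T, hbound⟩)

theorem tendsto_zero_of_le_one_sub_mul_add {a α β : ℕ → ℝ} (ha : ∀ t, 0 ≤ a t)
    (hα : ∀ᶠ t in atTop, α t ≤ 1)
    (hα_sum : Tendsto (fun n => ∑ i ∈ range n, α i) atTop atTop)
    (hrec : ∀ᶠ t in atTop, a (t + 1) ≤ (1 - α t) * a t + β t)
    (hβ : ∀ ε > 0, ∀ᶠ t in atTop, β t ≤ ε * α t) :
    Tendsto a atTop (nhds 0) := by
  refine tendsto_order.2 ⟨fun ε hε => Eventually.of_forall fun t => hε.trans_le (ha t),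
    fun ε hε => ?_⟩
  -- The excess of `a` over `ε / 2` contracts by the factor `1 - α t ≤ exp (-α t)`.
  have hexcess : Tendsto (fun t => max (a t - ε / 2) 0) atTop (nhds 0) := by
    refine tendsto_zero_of_le_exp_neg_mul (fun t => le_max_right _ _) hα_sum ?_
    filter_upwards [hα, hrec, hβ (ε / 2) (half_pos hε)] with t h1 h2 h3
    have hcontr : max (a (t + 1) - ε / 2) 0 ≤ (1 - α t) * max (a t - ε / 2) 0 :=
      max_le (by nlinarith [le_max_left (a t - ε / 2) 0])
        (mul_nonneg (by linarith) (le_max_right _ _))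
    exact hcontr.trans (by gcongr; linarith [add_one_le_exp (-α t)])
  filter_upwards [hexcess.eventually (gt_mem_nhds (half_pos hε))] with t ht
  linarith [le_max_left (a t - ε / 2) 0]

theorem eventually_rpow_le_mul_rpow {p q ε : ℝ} (hpq : p < q) (hε : 0 < ε) :
    ∀ᶠ x : ℝ in atTop, x ^ p ≤ ε * x ^ q := by
  filter_upwards [(tendsto_rpow_neg_atTop (sub_pos.2 hpq)).eventually (ge_mem_nhds hε),
    eventually_gt_atTop 0] with x hx hx0
  calc x ^ p = x ^ (-(q - p)) * x ^ q := by rw [← rpow_add hx0]; ring_nf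
    _ ≤ ε * x ^ q := by gcongr

theorem tendsto_sum_range_div_rpow_atTop {c p : ℝ} (hc : 0 < c) (hp : p ≤ 1) :
    Tendsto (fun n => ∑ i ∈ range n, c / ((i : ℝ) + 1) ^ p) atTop atTop := by
  refine tendsto_atTop_mono (fun n => ?_)
    (tendsto_sum_range_one_div_nat_succ_atTop.const_mul_atTop hc)
  rw [mul_sum]
  refine sum_le_sum fun i _ => ?_
  have hi : (1 : ℝ) ≤ i + 1 := by linarith [i.cast_nonneg (α := ℝ)]
  rw [mul_one_div]
  exact div_le_div_of_nonneg_left hc.le (by positivity) (rpow_le_self_of_one_le hi hp)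

theorem add_one_rpow_le_one_add_inv_mul_rpow {x δ : ℝ} (hx : 0 < x) (hδ : δ ≤ 1) :
    (x + 1) ^ δ ≤ (1 + x⁻¹) * x ^ δ := by
  rw [show x + 1 = (1 + x⁻¹) * x by field_simp, mul_rpow (by positivity) hx.le]
  gcongr
  exact rpow_le_self_of_one_le (by simp [hx.le]) hδ

theorem add_one_rpow_mul_abs_le {x δ r s w : ℝ} (hx : 1 ≤ x) (hδ : δ ≤ 1)
    (hr : r ≤ 1) (hxr : x⁻¹ ≤ r / 2) (hs : 0 ≤ s) :
    (x + 1) ^ δ * |(1 - r) * w + s| ≤ (1 - r / 2) * (x ^ δ * |w|) + 2 * x ^ δ * s := by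
  have hx0 : 0 < x := by linarith
  have habs : |(1 - r) * w + s| ≤ (1 - r) * |w| + s := by
    calc |(1 - r) * w + s| ≤ |(1 - r) * w| + |s| := abs_add_le _ _
      _ = (1 - r) * |w| + s := by rw [abs_mul, abs_of_nonneg (by linarith), abs_of_nonneg hs]
  have hinv : x⁻¹ ≤ 1 := inv_le_one_of_one_le₀ hx
  have hinv0 : 0 < x⁻¹ := inv_pos.2 hx0
  calc (x + 1) ^ δ * |(1 - r) * w + s| ≤ ((1 + x⁻¹) * x ^ δ) * ((1 - r) * |w| + s) :=
        mul_le_mul (add_one_rpow_le_one_add_inv_mul_rpow hx0 hδ) habs (abs_nonneg _)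
          (by positivity)
    _ = (1 + x⁻¹) * (1 - r) * (x ^ δ * |w|) + (1 + x⁻¹) * (x ^ δ * s) := by ring
    _ ≤ (1 - r / 2) * (x ^ δ * |w|) + 2 * (x ^ δ * s) := by
        gcongr
        · nlinarith
        · linarith
    _ = _ := by ring

theorem eventually_rpow_mul_abs_succ_le {c1 c2 δ0 δ1 δ2 : ℝ} (hc1 : 0 < c1) (hc2 : 0 ≤ c2)
    (hδ1 : 0 < δ1) (hδ1' : δ1 < 1) (hδ0 : δ0 ≤ 1) {w : ℕ → ℝ}
    (hw : ∀ t : ℕ, w (t + 1) =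
      (1 - c1 / ((t : ℝ) + 1) ^ δ1) * w t + c2 / ((t : ℝ) + 1) ^ δ2) :
    ∀ᶠ t : ℕ in atTop, (((t + 1 : ℕ) : ℝ) + 1) ^ δ0 * |w (t + 1)| ≤
      (1 - c1 / ((t : ℝ) + 1) ^ δ1 / 2) * (((t : ℝ) + 1) ^ δ0 * |w t|) +
        2 * ((t : ℝ) + 1) ^ δ0 * (c2 / ((t : ℝ) + 1) ^ δ2) := by
  have hsmall : ∀ᶠ x : ℝ in atTop, c1 / x ^ δ1 ≤ 1 :=
    (tendsto_const_nhds.div_atTop (tendsto_rpow_atTop hδ1)).eventually (ge_mem_nhds one_pos)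
  have hinv : ∀ᶠ x : ℝ in atTop, x⁻¹ ≤ c1 / x ^ δ1 / 2 := by
    filter_upwards [eventually_rpow_le_mul_rpow (by linarith : (-1 : ℝ) < -δ1) (half_pos hc1),
      eventually_gt_atTop 0] with x hx hx0
    rwa [rpow_neg_one, rpow_neg hx0.le, ← div_eq_mul_inv, div_right_comm] at hx
  have hx : Tendsto (fun t : ℕ => (t : ℝ) + 1) atTop atTop :=
    tendsto_atTop_add_const_right _ 1 tendsto_natCast_atTop_atTop
  filter_upwards [hx.eventually hsmall, hx.eventually hinv,
    hx.eventually (eventually_ge_atTop (1 : ℝ))] with t h1 h2 h3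
  rw [hw t]
  push_cast
  exact add_one_rpow_mul_abs_le h3 hδ0 h1 h2 (by positivity)

theorem eventually_mul_rpow_mul_div_rpow_le {c1 c2 δ0 δ1 δ2 ε : ℝ} (hc1 : 0 < c1)
    (hc2 : 0 < c2) (hε : 0 < ε) (hδ : δ0 < δ2 - δ1) :
    ∀ᶠ x : ℝ in atTop, 2 * x ^ δ0 * (c2 / x ^ δ2) ≤ ε * (c1 / x ^ δ1 / 2) := by
  filter_upwards [eventually_rpow_le_mul_rpow (by linarith : δ0 - δ2 < -δ1)
    (by positivity : 0 < ε * c1 / (4 * c2)), eventually_gt_atTop 0] with x hx hx0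
  rw [rpow_sub hx0, rpow_neg hx0.le] at hx
  calc 2 * x ^ δ0 * (c2 / x ^ δ2) = 2 * c2 * (x ^ δ0 / x ^ δ2) := by ring
    _ ≤ 2 * c2 * (ε * c1 / (4 * c2) * (x ^ δ1)⁻¹) := by gcongr
    _ = ε * (c1 / x ^ δ1 / 2) := by field_simp; ring

/-- Lemma 5 (Kar et al.): convergence of the scalar time-varying recursion
`w_{t+1} = (1 - c1/(t+1)^δ1) w_t + c2/(t+1)^δ2`. -/
theorem timeVaryingConvergence
    (c1 c2 δ1 δ2 : ℝ) (hc1 : 0 < c1) (hc2 : 0 < c2)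
    (hδ1 : 0 < δ1) (hδ12 : δ1 < δ2) (hδ2 : δ2 < 1)
    (w : ℕ → ℝ)
    (hw : ∀ t : ℕ, w (t + 1) =
      (1 - c1 / ((t : ℝ) + 1) ^ δ1) * w t + c2 / ((t : ℝ) + 1) ^ δ2) :
    ∀ δ0 : ℝ, 0 ≤ δ0 → δ0 < δ2 - δ1 →
      Filter.Tendsto (fun t : ℕ => ((t : ℝ) + 1) ^ δ0 * w t)
        Filter.atTop (nhds 0) := by
  intro δ0 _ hδ0
  have hx : Tendsto (fun t : ℕ => (t : ℝ) + 1) atTop atTop :=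
    tendsto_atTop_add_const_right _ 1 tendsto_natCast_atTop_atTop
  have hα : ∀ᶠ x : ℝ in atTop, c1 / x ^ δ1 / 2 ≤ 1 :=
    ((tendsto_const_nhds.div_atTop (tendsto_rpow_atTop hδ1)).div_const 2).eventually
      (ge_mem_nhds (by norm_num))
  have hα_sum :
      Tendsto (fun n => ∑ i ∈ range n, c1 / ((i : ℝ) + 1) ^ δ1 / 2) atTop atTop := by
    simpa only [div_right_comm] using
      tendsto_sum_range_div_rpow_atTop (half_pos hc1) (by linarith)
  have hrec := eventually_rpow_mul_abs_succ_le hc1 hc2.le hδ1 (by linarith) (by linarith) hw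
  have ha : Tendsto (fun t : ℕ => ((t : ℝ) + 1) ^ δ0 * |w t|) atTop (nhds 0) :=
    tendsto_zero_of_le_one_sub_mul_add (fun t => by positivity) (hx.eventually hα) hα_sum hrec
      fun ε hε => hx.eventually (eventually_mul_rpow_mul_div_rpow_le hc1 hc2 hε hδ0)
  refine squeeze_zero_norm (fun t => ?_) ha
  rw [norm_mul, norm_eq_abs, norm_eq_abs, abs_of_nonneg (by positivity)]
end

section
/- Let $c_1, c_2, c_3 > 0$, $0 < \delta_1 < \delta_2 < 1$, and consider the coupled scalar recursion: $\widehat{m}_{t+1} = (1 - \frac{c_1/(t+1)^{\delta_1}}{m_t + c_3}) m_t + c_2/(t+1)^{\delta_2}$ and $m_{t+1} = \max(|\widehat{m}_{t+1}|, |m_t|)$, with initial condition $m_0 \geq 0$. Then $\sup_{t \geq 0} m_t < \infty$. -/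
open Filter Real

/-- Lemma 7 (supBounded): the coupled recursion
`m̂_{t+1} = (1 - (c1/(t+1)^δ1)/(m_t + c3)) m_t + c2/(t+1)^δ2`,
`m_{t+1} = max(|m̂_{t+1}|, |m_t|)` with `m_0 ≥ 0` stays bounded. -/
theorem supBounded
    (c1 c2 c3 δ1 δ2 : ℝ) (hc1 : 0 < c1) (hc2 : 0 < c2) (hc3 : 0 < c3)
    (hδ1 : 0 < δ1) (hδ12 : δ1 < δ2) (hδ2 : δ2 < 1)
    (m mhat : ℕ → ℝ) (hm0 : 0 ≤ m 0)
    (hmhat : ∀ t : ℕ, mhat (t + 1) =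
      (1 - (c1 / ((t : ℝ) + 1) ^ δ1) / (m t + c3)) * m t + c2 / ((t : ℝ) + 1) ^ δ2)
    (hm : ∀ t : ℕ, m (t + 1) = max |mhat (t + 1)| |m t|) :
    BddAbove (Set.range m) := by
  -- nonnegativity of m
  have hmnn : ∀ t, 0 ≤ m t := by
    intro t
    cases t with
    | zero => exact hm0
    | succ n => rw [hm n]; exact le_trans (abs_nonneg _) (le_max_right _ _)
  -- monotonicity of m
  have hmono : Monotone m := by
    apply monotone_nat_of_le_succ
    intro t
    rw [hm t]
    exact le_trans (le_abs_self _) (le_max_right _ _)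
  have hxpos : ∀ t : ℕ, (0:ℝ) < (t:ℝ) + 1 := by
    intro t; positivity
  have hx1 : ∀ t : ℕ, (1:ℝ) ≤ (t:ℝ) + 1 := by
    intro t; have := Nat.cast_nonneg (α := ℝ) t; linarith
  -- asymptotic facts
  have htop : Tendsto (fun t : ℕ => (t:ℝ) + 1) atTop atTop :=
    tendsto_atTop_add_const_right _ 1 tendsto_natCast_atTop_atTop
  have h1 : Tendsto (fun t : ℕ => c1 * ((t:ℝ) + 1) ^ (-δ1)) atTop (nhds (c1 * 0)) :=
    Tendsto.const_mul c1 ((tendsto_rpow_neg_atTop hδ1).comp htop)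
  have h2 : Tendsto (fun t : ℕ => c2 * ((t:ℝ) + 1) ^ (δ1 - δ2)) atTop (nhds (c2 * 0)) := by
    have : Tendsto (fun x : ℝ => x ^ (δ1 - δ2)) atTop (nhds 0) := by
      have := tendsto_rpow_neg_atTop (y := δ2 - δ1) (by linarith)
      simpa [neg_sub] using this
    exact Tendsto.const_mul c2 (this.comp htop)
  have hev : ∀ᶠ t : ℕ in atTop,
      c1 * ((t:ℝ) + 1) ^ (-δ1) < c3 ∧ c2 * ((t:ℝ) + 1) ^ (δ1 - δ2) < c1 / 2 := by
    have e1 := h1.eventually_lt_const (by simpa using hc3)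
    have e2 := h2.eventually_lt_const (show c2 * 0 < c1 / 2 by linarith)
    exact e1.and e2
  obtain ⟨T, hT⟩ := eventually_atTop.mp hev
  -- translate the asymptotic bounds
  have hTa : ∀ t : ℕ, T ≤ t → c1 / ((t:ℝ) + 1) ^ δ1 ≤ c3 := by
    intro t ht
    have h := (hT t ht).1
    rw [Real.rpow_neg (le_of_lt (hxpos t))] at h
    rw [div_eq_mul_inv]
    exact le_of_lt h
  have hTb : ∀ t : ℕ, T ≤ t → c2 / ((t:ℝ) + 1) ^ δ2 ≤ (c1 / ((t:ℝ) + 1) ^ δ1) / 2 := by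
    intro t ht
    have h := (hT t ht).2
    have hxd1 : (0:ℝ) < ((t:ℝ) + 1) ^ δ1 := Real.rpow_pos_of_pos (hxpos t) _
    have hxd2 : (0:ℝ) < ((t:ℝ) + 1) ^ δ2 := Real.rpow_pos_of_pos (hxpos t) _
    have hsub : ((t:ℝ) + 1) ^ (δ1 - δ2) = ((t:ℝ) + 1) ^ δ1 / ((t:ℝ) + 1) ^ δ2 :=
      Real.rpow_sub (hxpos t) _ _
    rw [hsub] at h
    rw [div_le_div_iff₀ hxd2 (by norm_num : (0:ℝ) < 2), div_mul_eq_mul_div,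
      le_div_iff₀ hxd1]
    rw [← mul_div_assoc, div_lt_iff₀ hxd2] at h
    nlinarith
  -- one-step bound for t ≥ T
  have key : ∀ t, T ≤ t → m (t + 1) ≤ max (m t) (c3 + c2) := by
    intro t ht
    set x : ℝ := (t:ℝ) + 1 with hxdef
    have hxp := hxpos t
    have hxd1 : (0:ℝ) < x ^ δ1 := Real.rpow_pos_of_pos hxp _
    have hxd2 : (0:ℝ) < x ^ δ2 := Real.rpow_pos_of_pos hxp _
    have hxd2' : (1:ℝ) ≤ x ^ δ2 := Real.one_le_rpow (hx1 t) (by linarith)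
    have hmt := hmnn t
    have hden : (0:ℝ) < m t + c3 := by linarith
    set c : ℝ := c1 / x ^ δ1 with hcdef
    have hc0 : 0 < c := div_pos hc1 hxd1
    set b : ℝ := c2 / x ^ δ2 with hbdef
    have hb0 : 0 < b := div_pos hc2 hxd2
    have hbc2 : b ≤ c2 := by
      rw [hbdef, div_le_iff₀ hxd2]; nlinarith
    have hcc3 : c ≤ c3 := hTa t ht
    have hbc : b ≤ c / 2 := hTb t ht
    have ha1 : c / (m t + c3) ≤ 1 := by
      rw [div_le_one hden]; linarith
    have ha0 : 0 ≤ c / (m t + c3) := le_of_lt (div_pos hc0 hden)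
    have hhat : mhat (t + 1) = (1 - c / (m t + c3)) * m t + b := hmhat t
    have hhatnn : 0 ≤ mhat (t + 1) := by
      rw [hhat]
      have : 0 ≤ (1 - c / (m t + c3)) * m t := mul_nonneg (by linarith) hmt
      linarith
    rw [hm t, abs_of_nonneg hhatnn, abs_of_nonneg hmt]
    rcases le_or_gt c3 (m t) with hcase | hcase
    · -- decay dominates
      have hstep : mhat (t + 1) ≤ m t := by
        rw [hhat]
        have hkey : b ≤ (c / (m t + c3)) * m t := by
          rw [div_mul_eq_mul_div, le_div_iff₀ hden]
          nlinarith
        nlinarith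
      exact le_trans (max_le hstep le_rfl) (le_max_left _ _)
    · -- m t small
      have hstep : mhat (t + 1) ≤ c3 + c2 := by
        rw [hhat]
        have : (1 - c / (m t + c3)) * m t ≤ m t := by nlinarith
        linarith
      exact le_trans (max_le hstep (by linarith)) (le_max_right _ _)
  -- global bound
  have hall : ∀ k, m (T + k) ≤ max (m T) (c3 + c2) := by
    intro k
    induction k with
    | zero => simpa using le_max_left (m T) (c3 + c2)
    | succ n ih =>
      have hk := key (T + n) (Nat.le_add_right _ _)
      calc m (T + (n + 1)) = m ((T + n) + 1) := by ring_nf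
        _ ≤ max (m (T + n)) (c3 + c2) := hk
        _ ≤ max (max (m T) (c3 + c2)) (c3 + c2) := max_le_max ih le_rfl
        _ = max (m T) (c3 + c2) := by rw [max_assoc, max_self]
  refine ⟨max (m T) (c3 + c2), ?_⟩
  rintro y ⟨t, rfl⟩
  rcases le_or_gt t T with h | h
  · exact le_trans (hmono h) (le_max_left _ _)
  · have : t = T + (t - T) := by omega
    rw [this]
    exact hall _
end

section
/- In the setting of the recursion $\widehat{m}_{t+1} = (1 - \frac{c_1/(t+1)^{\delta_1}}{m_t + c_3}) m_t + c_2/(t+1)^{\delta_2}$, $m_{t+1} = \max(|\widehat{m}_{t+1}|, |m_t|)$ with $m_0 \geq 0$, $c_1, c_2, c_3 > 0$, $0 < \delta_1 < \delta_2 < 1$: the sequence $(m_t)$ is eventually constant; i.e., there exists a finite $T$ such that $m_t = m_T$ for all $t \geq T$. -/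
/-!
Since `m_{t+1} ≥ |m_t|`, the sequence is non-decreasing, so from `t = 1` on it stays above
`b := m_1 > 0`. Write `α_t = c₁/(t+1)^δ₁` and `β_t = c₂/(t+1)^δ₂`, so that
`m̂_{t+1} = (1 - α_t/(m_t + c₃)) m_t + β_t`. Eventually `α_t ≤ c₃`, which makes `m̂_{t+1} ≥ 0`,
and, because `δ₁ < δ₂`, eventually `β_t ≤ b/(b + c₃) · α_t ≤ α_t m_t/(m_t + c₃)`, which makes
`m̂_{t+1} ≤ m_t`. From then on `m_{t+1} = m_t`.
-/

open Filter Topology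

noncomputable def dampedStep (α β c x : ℝ) : ℝ := (1 - α / (x + c)) * x + β

section DampedStep

variable {α β c x : ℝ}

lemma dampedStep_nonneg (hc : 0 < c) (hx : 0 ≤ x) (hα : α ≤ c) (hβ : 0 ≤ β) :
    0 ≤ dampedStep α β c x := by
  have hcoef : α / (x + c) ≤ 1 := (div_le_one (by positivity)).2 (by linarith)
  unfold dampedStep
  have := mul_nonneg (sub_nonneg.2 hcoef) hx
  linarith

lemma dampedStep_le {b : ℝ} (hc : 0 < c) (hb : 0 < b) (hbx : b ≤ x) (hα : 0 ≤ α)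
    (hβ : β ≤ b / (b + c) * α) : dampedStep α β c x ≤ x := by
  have hratio : b / (b + c) ≤ x / (x + c) := by
    rw [div_le_div_iff₀ (by positivity) (by linarith)]
    nlinarith
  have hβ' : β ≤ α / (x + c) * x := by
    calc β ≤ b / (b + c) * α := hβ
      _ ≤ x / (x + c) * α := mul_le_mul_of_nonneg_right hratio hα
      _ = α / (x + c) * x := by ring
  unfold dampedStep
  linarith

lemma abs_dampedStep_le {b : ℝ} (hc : 0 < c) (hb : 0 < b) (hbx : b ≤ x) (hα₀ : 0 ≤ α)
    (hα : α ≤ c) (hβ₀ : 0 ≤ β) (hβ : β ≤ b / (b + c) * α) : |dampedStep α β c x| ≤ x := by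
  rw [abs_of_nonneg (dampedStep_nonneg hc (hb.le.trans hbx) hα hβ₀)]
  exact dampedStep_le hc hb hbx hα₀ hβ

end DampedStep

lemma tendsto_natCast_add_one_atTop : Tendsto (fun t : ℕ => (t : ℝ) + 1) atTop atTop :=
  tendsto_atTop_add_const_right _ 1 tendsto_natCast_atTop_atTop

lemma eventually_div_natCast_add_one_rpow_le (c : ℝ) {ε δ : ℝ} (hε : 0 < ε) (hδ : 0 < δ) :
    ∀ᶠ t : ℕ in atTop, c / ((t : ℝ) + 1) ^ δ ≤ ε := by
  have hlim : Tendsto (fun t : ℕ => c / ((t : ℝ) + 1) ^ δ) atTop (𝓝 0) :=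
    tendsto_const_nhds.div_atTop ((tendsto_rpow_atTop hδ).comp tendsto_natCast_add_one_atTop)
  exact hlim.eventually (ge_mem_nhds hε)

lemma eventually_div_natCast_add_one_rpow_le_mul (c₁ c₂ : ℝ) {k δ₁ δ₂ : ℝ} (hk : 0 < k * c₁)
    (hδ : δ₁ < δ₂) :
    ∀ᶠ t : ℕ in atTop, c₂ / ((t : ℝ) + 1) ^ δ₂ ≤ k * (c₁ / ((t : ℝ) + 1) ^ δ₁) := by
  filter_upwards [eventually_div_natCast_add_one_rpow_le c₂ hk (sub_pos.2 hδ)] with t ht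
  have hs : (0 : ℝ) < (t : ℝ) + 1 := by positivity
  calc c₂ / ((t : ℝ) + 1) ^ δ₂
      = c₂ / ((t : ℝ) + 1) ^ (δ₂ - δ₁) / ((t : ℝ) + 1) ^ δ₁ := by
        rw [div_div, ← Real.rpow_add hs, sub_add_cancel]
    _ ≤ k * c₁ / ((t : ℝ) + 1) ^ δ₁ := by gcongr
    _ = k * (c₁ / ((t : ℝ) + 1) ^ δ₁) := mul_div_assoc _ _ _

lemma monotone_of_eq_max_abs {m v : ℕ → ℝ} (hm : ∀ t, m (t + 1) = max |v (t + 1)| |m t|) :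
    Monotone m :=
  monotone_nat_of_le_succ fun t => (hm t).symm ▸ (le_abs_self _).trans (le_max_right _ _)

theorem supEventuallyConstant_general
    (c1 c2 c3 δ1 δ2 : ℝ) (hc1 : 0 < c1) (hc2 : 0 < c2) (hc3 : 0 < c3)
    (hδ1 : 0 < δ1) (hδ12 : δ1 < δ2)
    (m mhat : ℕ → ℝ) (hm0 : 0 ≤ m 0)
    (hmhat : ∀ t : ℕ, mhat (t + 1) =
      (1 - (c1 / ((t : ℝ) + 1) ^ δ1) / (m t + c3)) * m t + c2 / ((t : ℝ) + 1) ^ δ2)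
    (hm : ∀ t : ℕ, m (t + 1) = max |mhat (t + 1)| |m t|) :
    ∃ T : ℕ, ∀ t : ℕ, T ≤ t → m t = m T := by
  have hmono : Monotone m := monotone_of_eq_max_abs hm
  have hb : 0 < m 1 := by
    rcases hm0.eq_or_lt with h0 | h0
    · have hmhat1 : mhat 1 = c2 := by
        simpa [← h0] using hmhat 0
      rw [hm 0, hmhat1]
      exact (abs_pos.2 hc2.ne').trans_le (le_max_left _ _)
    · exact h0.trans_le (hmono zero_le_one)
  obtain ⟨T, hT⟩ := eventually_atTop.1 <|
    (eventually_div_natCast_add_one_rpow_le c1 hc3 hδ1).and <|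
    (eventually_div_natCast_add_one_rpow_le_mul c1 c2 (k := m 1 / (m 1 + c3))
      (by positivity) hδ12).and (eventually_ge_atTop 1)
  refine ⟨T, fun t ht => Nat.le_induction rfl (fun n hn ih => ?_) t ht⟩
  obtain ⟨hα, hβ, hn1⟩ := hT n hn
  have hstep : |mhat (n + 1)| ≤ m n := (hmhat n).symm ▸
    abs_dampedStep_le hc3 hb (hmono hn1) (by positivity) hα (by positivity) hβ
  rw [hm n, max_eq_right (hstep.trans (le_abs_self _)),
    abs_of_nonneg (hm0.trans (hmono (Nat.zero_le n))), ih]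

/-- The sequence `m_t` of the supBounded recursion is eventually constant. -/
theorem supEventuallyConstant
    (c1 c2 c3 δ1 δ2 : ℝ) (hc1 : 0 < c1) (hc2 : 0 < c2) (hc3 : 0 < c3)
    (hδ1 : 0 < δ1) (hδ12 : δ1 < δ2) (hδ2 : δ2 < 1)
    (m mhat : ℕ → ℝ) (hm0 : 0 ≤ m 0)
    (hmhat : ∀ t : ℕ, mhat (t + 1) =
      (1 - (c1 / ((t : ℝ) + 1) ^ δ1) / (m t + c3)) * m t + c2 / ((t : ℝ) + 1) ^ δ2)
    (hm : ∀ t : ℕ, m (t + 1) = max |mhat (t + 1)| |m t|) :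
    ∃ T : ℕ, ∀ t : ℕ, T ≤ t → m t = m T :=
  supEventuallyConstant_general c1 c2 c3 δ1 δ2 hc1 hc2 hc3 hδ1 hδ12 m mhat hm0 hmhat hm
end

section
/- Let $h_1, \dots, h_P \in \mathbb{R}^M$ be unit vectors and $s \geq 0$. Suppose that for every subset $\mathcal{A} \subseteq \{1, \dots, P\}$ with $|\mathcal{A}| \leq s$, the matrix $\mathcal{G}_{\mathcal{N}} = \sum_{p \notin \mathcal{A}} h_p h_p^\intercal$ has minimum eigenvalue strictly greater than $|\mathcal{A}|$. Then for every subset $\mathcal{X} \subseteq \{1, \dots, P\}$ with $|\mathcal{X}| = 2s$, the matrix $\sum_{p \notin \mathcal{X}} h_p h_p^\intercal$ is invertible (i.e., the measurement set is globally $2s$-sparse observable). -/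
open Finset Matrix

/-- If for every attack set `A` with `|A| ≤ s` the Grammian of the remaining
measurements has minimum eigenvalue `> |A|` (expressed via the Rayleigh quotient,
valid since the Grammian is symmetric), then the measurement set is globally
`2s`-sparse observable. -/
theorem resilience_implies_sparse_observability
    (P M s : ℕ) (h : Fin P → Fin M → ℝ)
    (hnorm : ∀ p, h p ⬝ᵥ h p = 1)
    (hres : ∀ A : Finset (Fin P), A.card ≤ s →
      ∀ v : Fin M → ℝ, v ≠ 0 →
        (A.card : ℝ) * (v ⬝ᵥ v) <
          v ⬝ᵥ (∑ p ∈ Aᶜ, Matrix.vecMulVec (h p) (h p)) *ᵥ v) :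
    ∀ X : Finset (Fin P), X.card = 2 * s →
      IsUnit (∑ p ∈ Xᶜ, Matrix.vecMulVec (h p) (h p)) := by
  intro X hX
  -- choose A ⊆ X with |A| = s
  obtain ⟨A, hAX, hA⟩ := Finset.exists_subset_card_eq (show s ≤ X.card by omega)
  -- key quadratic form computation
  have quad : ∀ (S : Finset (Fin P)) (v : Fin M → ℝ),
      v ⬝ᵥ (∑ p ∈ S, Matrix.vecMulVec (h p) (h p)) *ᵥ v
        = ∑ p ∈ S, (h p ⬝ᵥ v) ^ 2 := by
    intro S v
    have hsum : (∑ p ∈ S, Matrix.vecMulVec (h p) (h p)) *ᵥ v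
        = ∑ p ∈ S, (Matrix.vecMulVec (h p) (h p) *ᵥ v) := by
      ext i
      simp [Matrix.mulVec, dotProduct, Matrix.sum_apply, Finset.sum_apply, Finset.sum_mul]
      rw [Finset.sum_comm]
    rw [hsum]
    rw [show v ⬝ᵥ (∑ p ∈ S, Matrix.vecMulVec (h p) (h p) *ᵥ v)
        = ∑ p ∈ S, v ⬝ᵥ (Matrix.vecMulVec (h p) (h p) *ᵥ v) by
      simp only [dotProduct, Finset.sum_apply, Finset.mul_sum]
      rw [Finset.sum_comm]]
    refine Finset.sum_congr rfl fun p _ => ?_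
    simp only [Matrix.mulVec, dotProduct, Matrix.vecMulVec_apply, Finset.mul_sum,
      Finset.sum_mul, sq]
    rw [Finset.sum_comm]
    refine Finset.sum_congr rfl fun i _ => Finset.sum_congr rfl fun j _ => by ring
  have hPD : (∑ p ∈ Xᶜ, Matrix.vecMulVec (h p) (h p)).PosDef := by
    constructor
    · -- Hermitian
      refine Matrix.IsHermitian.ext fun i j => ?_
      simp [Matrix.sum_apply, Matrix.vecMulVec, mul_comm]
    · intro v hv
      have hres' := hres A (by omega) v (fun h0 => hv (DFunLike.coe_injective (h0.trans Finsupp.coe_zero.symm)))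
      rw [quad] at hres'
      -- Aᶜ = Xᶜ ∪ (X \ A), disjoint
      have hsplit : (Aᶜ : Finset (Fin P)) = Xᶜ ∪ (X \ A) := by
        ext p
        simp only [Finset.mem_compl, Finset.mem_union, Finset.mem_sdiff]
        by_cases hp : p ∈ X
        · constructor
          · intro hpa; exact Or.inr ⟨hp, hpa⟩
          · rintro (hc | ⟨_, hpa⟩)
            · exact absurd hp hc
            · exact hpa
        · constructor
          · intro _; exact Or.inl hp
          · intro _ hpa; exact hp (hAX hpa)
      have hdisj : Disjoint (Xᶜ : Finset (Fin P)) (X \ A) := by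
        rw [Finset.disjoint_left]
        intro p hp hp'
        exact (Finset.mem_compl.mp hp) (Finset.mem_sdiff.mp hp').1
      rw [hsplit, Finset.sum_union hdisj] at hres'
      -- bound the (X \ A) part by s * ‖v‖²
      have hcard : (X \ A).card = s := by
        rw [Finset.card_sdiff_of_subset hAX]; omega
      have hCS : ∀ p, (h p ⬝ᵥ v) ^ 2 ≤ v ⬝ᵥ v := by
        intro p
        have h1 : ∑ x, h p x * h p x = 1 := hnorm p
        have := Finset.sum_mul_sq_le_sq_mul_sq Finset.univ (h p) v
        simpa [dotProduct, sq, h1] using this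
      have hbound : ∑ p ∈ X \ A, (h p ⬝ᵥ v) ^ 2 ≤ (s : ℝ) * (v ⬝ᵥ v) := by
        calc ∑ p ∈ X \ A, (h p ⬝ᵥ v) ^ 2
            ≤ ∑ _p ∈ X \ A, v ⬝ᵥ v := Finset.sum_le_sum fun p _ => hCS p
          _ = (s : ℝ) * (v ⬝ᵥ v) := by rw [Finset.sum_const, hcard, nsmul_eq_mul]
      have hApos : (A.card : ℝ) = (s : ℝ) := by rw [hA]
      have : 0 < ∑ p ∈ Xᶜ, (h p ⬝ᵥ v) ^ 2 := by
        rw [hApos] at hres'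
        linarith
      simpa [quad, star, dotProduct, Finsupp.sum_fintype, Matrix.mulVec, Finset.mul_sum, mul_assoc] using this.trans_eq (quad Xᶜ v).symm
  exact hPD.isUnit
end

section
/- Let $h_1, \dots, h_P \in \mathbb{R}^M$ be unit vectors such that the set of distinct vectors among $\{h_1, \dots, h_P\}$ is pairwise orthogonal. If the set $\{1, \dots, P\}$ is globally $2s$-sparse observable (i.e., $\sum_{p \notin \mathcal{X}} h_p h_p^\intercal$ is invertible for every $\mathcal{X}$ with $|\mathcal{X}| \leq 2s$), then for every subset $\mathcal{A}$ with $|\mathcal{A}| \leq s$, $\lambda_{\min}(\sum_{p \notin \mathcal{A}} h_p h_p^\intercal) > |\mathcal{A}|$. -/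
open Finset Matrix

private lemma vmv_mulVec {M : ℕ} (w u v : Fin M → ℝ) :
    Matrix.vecMulVec w u *ᵥ v = (u ⬝ᵥ v) • w := by
  funext i
  simp only [Matrix.mulVec, dotProduct, Matrix.vecMulVec_apply, Pi.smul_apply,
    smul_eq_mul, Finset.sum_mul]
  exact Finset.sum_congr rfl fun j _ => by ring

private lemma sum_mulVec' {P M : ℕ} (S : Finset (Fin P)) (A : Fin P → Matrix (Fin M) (Fin M) ℝ)
    (v : Fin M → ℝ) : (∑ p ∈ S, A p) *ᵥ v = ∑ p ∈ S, A p *ᵥ v := by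
  funext i
  simp only [Matrix.mulVec, dotProduct, Matrix.sum_apply, Finset.sum_apply,
    Finset.sum_mul]
  exact Finset.sum_comm

private lemma dot_sum' {M : ℕ} {ι : Type*} (S : Finset ι) (v : Fin M → ℝ) (f : ι → Fin M → ℝ) :
    v ⬝ᵥ (∑ p ∈ S, f p) = ∑ p ∈ S, v ⬝ᵥ f p := by
  simp only [dotProduct, Finset.sum_apply, Finset.mul_sum]
  exact Finset.sum_comm

private lemma mulVec_eq_zero' {n : ℕ} {G : Matrix (Fin n) (Fin n) ℝ} (hG : IsUnit G)
    {x : Fin n → ℝ} (hx : G *ᵥ x = 0) : x = 0 := by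
  obtain ⟨u, hu⟩ := hG
  have h2 : (↑u⁻¹ : Matrix (Fin n) (Fin n) ℝ) *ᵥ (G *ᵥ x) = x := by
    rw [Matrix.mulVec_mulVec, ← hu, Units.inv_mul, Matrix.one_mulVec]
  rw [hx, Matrix.mulVec_zero] at h2
  exact h2.symm

/-- If the distinct measurement vectors are pairwise orthogonal and the measurement
set is globally `2s`-sparse observable, then for every attack set `A` with `|A| ≤ s`
the Grammian of the remaining measurements has minimum eigenvalue `> |A|`
(Rayleigh-quotient formulation). -/
theorem sparse_observability_implies_resilience
    (P M s : ℕ) (h : Fin P → Fin M → ℝ)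
    (hnorm : ∀ p, h p ⬝ᵥ h p = 1)
    (horth : ∀ p q, h p ≠ h q → h p ⬝ᵥ h q = 0)
    (hobs : ∀ X : Finset (Fin P), X.card ≤ 2 * s →
      IsUnit (∑ p ∈ Xᶜ, Matrix.vecMulVec (h p) (h p))) :
    ∀ A : Finset (Fin P), A.card ≤ s →
      ∀ v : Fin M → ℝ, v ≠ 0 →
        (A.card : ℝ) * (v ⬝ᵥ v) <
          v ⬝ᵥ (∑ p ∈ Aᶜ, Matrix.vecMulVec (h p) (h p)) *ᵥ v := by
  classical
  intro A hA v hv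
  -- every fiber of h has at least 2s+1 elements
  have hfiber : ∀ p : Fin P, 2 * s + 1 ≤ (univ.filter fun q => h q = h p).card := by
    intro p
    by_contra hc
    push_neg at hc
    have hX : (univ.filter fun q => h q = h p).card ≤ 2 * s := by omega
    have hu := hobs _ hX
    have hz : (∑ q ∈ (univ.filter fun q => h q = h p)ᶜ, vecMulVec (h q) (h q)) *ᵥ h p = 0 := by
      rw [sum_mulVec']
      refine Finset.sum_eq_zero fun q hq => ?_
      rw [vmv_mulVec]
      have hne : h q ≠ h p := by simpa using Finset.mem_compl.mp hq
      rw [horth q p hne, zero_smul]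
    have hz0 := mulVec_eq_zero' hu hz
    have h1 := hnorm p
    rw [hz0] at h1
    simp at h1
  -- the distinct values
  set B : Finset (Fin M → ℝ) := univ.image h with hB
  have hmemB : ∀ p : Fin P, h p ∈ B := fun p => Finset.mem_image_of_mem h (Finset.mem_univ p)
  set u : Fin M → ℝ := ∑ w ∈ B, (w ⬝ᵥ v) • w with hu
  -- h p ⬝ᵥ u = h p ⬝ᵥ v
  have hdotu : ∀ p : Fin P, h p ⬝ᵥ u = h p ⬝ᵥ v := by
    intro p
    rw [hu, dot_sum']
    rw [Finset.sum_eq_single (h p)]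
    · rw [dotProduct_smul, smul_eq_mul, hnorm p, mul_one, dotProduct_comm]
    · intro w hw hwne
      obtain ⟨q, _, rfl⟩ := Finset.mem_image.mp hw
      rw [dotProduct_smul, smul_eq_mul, horth p q (fun hh => hwne hh.symm), mul_zero]
    · intro hp; exact absurd (hmemB p) hp
  -- v = u
  have hveq : v = u := by
    have hu0 := hobs ∅ (by simp)
    have hz : (∑ p ∈ (∅ : Finset (Fin P))ᶜ, vecMulVec (h p) (h p)) *ᵥ (v - u) = 0 := by
      rw [sum_mulVec']
      refine Finset.sum_eq_zero fun p _ => ?_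
      rw [vmv_mulVec, dotProduct_sub, hdotu p, sub_self, zero_smul]
    have := mulVec_eq_zero' hu0 hz
    exact sub_eq_zero.mp this
  -- Parseval
  have parseval : v ⬝ᵥ v = ∑ w ∈ B, (w ⬝ᵥ v) ^ 2 := by
    nth_rewrite 2 [hveq]
    rw [hu, dot_sum']
    refine Finset.sum_congr rfl fun w _ => ?_
    rw [dotProduct_smul, smul_eq_mul, dotProduct_comm, sq]
  -- positivity of ‖v‖²
  have hvpos : 0 < v ⬝ᵥ v := by
    rcases lt_or_eq_of_le (Finset.sum_nonneg fun i _ => mul_self_nonneg (v i)) with hlt | heq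
    · exact hlt
    · exact absurd (dotProduct_self_eq_zero.mp heq.symm) hv
  -- rewrite the quadratic form
  have hform : v ⬝ᵥ (∑ p ∈ Aᶜ, Matrix.vecMulVec (h p) (h p)) *ᵥ v
      = ∑ p ∈ Aᶜ, (h p ⬝ᵥ v) ^ 2 := by
    rw [sum_mulVec']
    simp_rw [vmv_mulVec]
    rw [dot_sum']
    refine Finset.sum_congr rfl fun p _ => ?_
    rw [dotProduct_smul, smul_eq_mul, dotProduct_comm, sq]
  rw [hform]
  -- group by values
  have hgroup : ∑ p ∈ Aᶜ, (h p ⬝ᵥ v) ^ 2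
      = ∑ w ∈ Aᶜ.image h, ((Aᶜ.filter fun q => h q = w).card) • (w ⬝ᵥ v) ^ 2 :=
    Finset.sum_comp (fun w => (w ⬝ᵥ v) ^ 2) h
  -- the image over Aᶜ is all of B
  have himg : Aᶜ.image h = B := by
    refine Finset.Subset.antisymm (Finset.image_subset_image (Finset.subset_univ _)) ?_
    intro w hw
    obtain ⟨p, _, rfl⟩ := Finset.mem_image.mp hw
    by_contra hnot
    have hsub : (univ.filter fun q => h q = h p) ⊆ A := by
      intro q hq
      have hq' : h q = h p := (Finset.mem_filter.mp hq).2
      by_contra hqA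
      exact hnot (Finset.mem_image.mpr ⟨q, Finset.mem_compl.mpr hqA, hq'⟩)
    have := Finset.card_le_card hsub
    have := hfiber p
    omega
  rw [hgroup, himg]
  -- fiber counts outside A are large
  have hcount : ∀ w ∈ B, A.card + 1 ≤ (Aᶜ.filter fun q => h q = w).card := by
    intro w hw
    obtain ⟨p, _, rfl⟩ := Finset.mem_image.mp hw
    have hsub : (univ.filter fun q => h q = h p) ⊆ (Aᶜ.filter fun q => h q = h p) ∪ A := by
      intro q hq
      have hq' : h q = h p := (Finset.mem_filter.mp hq).2
      by_cases hqA : q ∈ A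
      · exact Finset.mem_union_right _ hqA
      · exact Finset.mem_union_left _ (Finset.mem_filter.mpr ⟨Finset.mem_compl.mpr hqA, hq'⟩)
    have h1 := (Finset.card_le_card hsub).trans (Finset.card_union_le _ _)
    have h2 := hfiber p
    omega
  -- final estimate
  calc (A.card : ℝ) * (v ⬝ᵥ v)
      < ((A.card : ℝ) + 1) * (v ⬝ᵥ v) := by nlinarith
    _ = ∑ w ∈ B, ((A.card : ℝ) + 1) * (w ⬝ᵥ v) ^ 2 := by
        rw [← Finset.mul_sum, ← parseval]
    _ ≤ ∑ w ∈ B, ((Aᶜ.filter fun q => h q = w).card) • (w ⬝ᵥ v) ^ 2 := by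
        refine Finset.sum_le_sum fun w hw => ?_
        rw [nsmul_eq_mul]
        have hc := hcount w hw
        have hc' : (A.card : ℝ) + 1 ≤ ((Aᶜ.filter fun q => h q = w).card : ℝ) := by
          exact_mod_cast hc
        exact mul_le_mul_of_nonneg_right hc' (sq_nonneg _)
end
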